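/- arXiv:1508.00244 — 3 statements merged into one kernel-verified Lean document; each statement's English description precedes it below -/
import Mathlib

section
/- Let T be a measure-preserving transformation of a probability space (X,m), E ⊆ X measurable, and 0 < δ < 1. Define E* = { x ∈ X : liminf_{n→∞} #{ n' < δn : T^{n−n'} x ∈ E }/(δn) > 0 }. Then m(E*) ≥ m(E). -/
/-!
The core is Birkhoff's pointwise ergodic theorem for measurable `f : X → [0, 1]`, proved in the
Katznelson–Weiss way. Let `f̄` and `f̲` be the limsup and liminf of the averages `Sₙ f / n`.
Since `f̄ ≤ f̄ ∘ T`, for `ψ = f̄ - ε` every point has a time `n ≥ 1` with `n ψ ≤ Sₙ f`. Outside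
a set `B` of measure `< ε` such a time is at most `N`; for `g = f + 1_B` every point has one, and
chaining these times along an orbit gives `L ψ ≤ S_L g + N`, hence `∫ ψ ≤ ∫ g ≤ ∫ f + ε`. So
`∫ f̄ ≤ ∫ f`; applied to `1 - f` this gives `∫ f ≤ ∫ f̲`, so `f̲ = f̄` almost everywhere.

For `f = 1_E` this yields `m E ≤ ∫ f̄ ≤ m {f̄ > 0}`. At a point where `Sₙ f / n → c > 0`, the sum
over the window `(n(1 - δ), n]` is `S_{n+1} - S_{n+1-⌈δn⌉}`, which is `δ n c + o(n)`, so the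
point lies in `E*`.
-/

open Filter MeasureTheory Topology
open scoped ENNReal

theorem ENNReal.le_of_forall_nat_mul_le_mul_add {a b c : ℝ≥0∞} (hc : c ≠ ∞)
    (h : ∀ L : ℕ, L * a ≤ L * b + c) : a ≤ b := by
  refine ENNReal.le_of_forall_pos_le_add fun ε hε _ => ?_
  have hε0 : (ε : ℝ≥0∞) ≠ 0 := by exact_mod_cast hε.ne'
  obtain ⟨L, hL⟩ := ENNReal.exists_nat_gt (ENNReal.div_ne_top hc hε0)
  refine (ENNReal.mul_le_mul_iff_right hL.ne_bot (ENNReal.natCast_ne_top L)).1 ?_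
  calc (L : ℝ≥0∞) * a ≤ L * b + c := h L
    _ ≤ L * b + L * ε := by
        gcongr
        exact (ENNReal.div_le_iff_le_mul (.inl hε0) (.inl (by simp))).1 hL.le
    _ = L * (b + ε) := (mul_add _ _ _).symm

theorem lintegral_le_measure_setOf_pos {X : Type*} [MeasurableSpace X] {m : Measure X}
    {h : X → ℝ≥0∞} (hh : ∀ x, h x ≤ 1) : ∫⁻ x, h x ∂m ≤ m {x | 0 < h x} := by
  calc ∫⁻ x, h x ∂m ≤ ∫⁻ x, {x | 0 < h x}.indicator (fun _ => 1) x ∂m := by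
        refine lintegral_mono fun x => ?_
        by_cases hx : 0 < h x
        · simpa [Set.indicator_of_mem (show x ∈ {x | 0 < h x} from hx)] using hh x
        · simp [not_lt.1 hx]
    _ ≤ 1 * m {x | 0 < h x} := lintegral_indicator_const_le _ _
    _ = m {x | 0 < h x} := one_mul _

namespace PointwiseErgodic

variable {X : Type*} {T : X → X} {f : X → ℝ≥0∞}

noncomputable def birkhoffLimsup (T : X → X) (f : X → ℝ≥0∞) (x : X) : ℝ≥0∞ :=
  limsup (fun n : ℕ => birkhoffSum T f n x / n) atTop

noncomputable def birkhoffLiminf (T : X → X) (f : X → ℝ≥0∞) (x : X) : ℝ≥0∞ :=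
  liminf (fun n : ℕ => birkhoffSum T f n x / n) atTop

theorem birkhoffSum_le_of_le_one (hf1 : ∀ x, f x ≤ 1) (n : ℕ) (x : X) :
    birkhoffSum T f n x ≤ n := by
  simpa [birkhoffSum] using
    Finset.sum_le_card_nsmul (Finset.range n) (fun k => f (T^[k] x)) 1 fun k _ => hf1 _

theorem birkhoffSum_div_le_one (hf1 : ∀ x, f x ≤ 1) (n : ℕ) (x : X) :
    birkhoffSum T f n x / n ≤ 1 :=
  ENNReal.div_le_of_le_mul (by simpa using birkhoffSum_le_of_le_one hf1 n x)

theorem birkhoffLimsup_le_one (hf1 : ∀ x, f x ≤ 1) (x : X) : birkhoffLimsup T f x ≤ 1 :=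
  limsup_le_of_le (by isBoundedDefault) (.of_forall (birkhoffSum_div_le_one hf1 · x))

theorem birkhoffLiminf_le_birkhoffLimsup (x : X) :
    birkhoffLiminf T f x ≤ birkhoffLimsup T f x :=
  liminf_le_limsup

theorem birkhoffLiminf_le_one (hf1 : ∀ x, f x ≤ 1) (x : X) : birkhoffLiminf T f x ≤ 1 :=
  (birkhoffLiminf_le_birkhoffLimsup x).trans (birkhoffLimsup_le_one hf1 x)

theorem birkhoffLimsup_le_birkhoffLimsup_apply (hf1 : ∀ x, f x ≤ 1) (x : X) :
    birkhoffLimsup T f x ≤ birkhoffLimsup T f (T x) := by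
  have hstep : ∀ n : ℕ, birkhoffSum T f (n + 1) x / (n + 1 : ℕ)
      ≤ 1 / (n + 1 : ℕ) + birkhoffSum T f n (T x) / n := by
    intro n
    rw [birkhoffSum_succ', ENNReal.add_div]
    gcongr
    · exact hf1 x
    · exact_mod_cast n.le_succ
  have hlim : Tendsto (fun n : ℕ => (1 : ℝ≥0∞) / (n + 1 : ℕ)) atTop (𝓝 0) := by
    simpa [one_div, Function.comp_def] using
      ENNReal.tendsto_inv_nat_nhds_zero.comp (tendsto_add_atTop_nat 1)
  calc birkhoffLimsup T f x
      = limsup (fun n : ℕ => birkhoffSum T f (n + 1) x / (n + 1 : ℕ)) atTop :=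
        (limsup_nat_add (fun n : ℕ => birkhoffSum T f n x / n) 1).symm
    _ ≤ limsup ((fun n : ℕ => (1 : ℝ≥0∞) / (n + 1 : ℕ)) +
          fun n => birkhoffSum T f n (T x) / n) atTop := limsup_le_limsup (.of_forall hstep)
    _ = birkhoffLimsup T f (T x) := ENNReal.limsup_add_of_left_tendsto_zero hlim _

theorem birkhoffLimsup_le_birkhoffLimsup_iterate (hf1 : ∀ x, f x ≤ 1) (k : ℕ) (x : X) :
    birkhoffLimsup T f x ≤ birkhoffLimsup T f (T^[k] x) := by
  induction k generalizing x with
  | zero => rfl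
  | succ k ih =>
    exact (birkhoffLimsup_le_birkhoffLimsup_apply hf1 x).trans (ih (T x))

theorem mul_le_birkhoffSum_add_of_stopping {ψ g : X → ℝ≥0∞} {N : ℕ} (hψ1 : ∀ x, ψ x ≤ 1)
    (hψT : ∀ k x, ψ x ≤ ψ (T^[k] x))
    (hstop : ∀ x, ∃ n ∈ Finset.Icc 1 N, n * ψ x ≤ birkhoffSum T g n x) (L : ℕ) (x : X) :
    L * ψ x ≤ birkhoffSum T g L x + N := by
  induction L using Nat.strong_induction_on generalizing x with
  | _ L ih =>
    rcases le_or_gt L N with hLN | hNL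
    · calc (L : ℝ≥0∞) * ψ x ≤ L * 1 := by gcongr; exact hψ1 x
        _ ≤ birkhoffSum T g L x + N := by
          rw [mul_one]; exact le_add_left (by exact_mod_cast hLN)
    · obtain ⟨n, hn, hnx⟩ := hstop x
      rw [Finset.mem_Icc] at hn
      have hL : L = n + (L - n) := by omega
      calc (L : ℝ≥0∞) * ψ x = n * ψ x + (L - n : ℕ) * ψ x := by
            rw [← add_mul, ← Nat.cast_add, ← hL]
        _ ≤ n * ψ x + (L - n : ℕ) * ψ (T^[n] x) := by gcongr; exact hψT n x
        _ ≤ birkhoffSum T g n x + (birkhoffSum T g (L - n) (T^[n] x) + N) :=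
            add_le_add hnx (ih (L - n) (by omega) _)
        _ = birkhoffSum T g L x + N := by
            rw [← add_assoc, ← birkhoffSum_add, ← hL]

theorem exists_mul_le_birkhoffSum (hf1 : ∀ x, f x ≤ 1) {ε : ℝ≥0∞} (hε : ε ≠ 0) (x : X) :
    ∃ n, 1 ≤ n ∧ n * (birkhoffLimsup T f x - ε) ≤ birkhoffSum T f n x := by
  by_cases hsmall : birkhoffLimsup T f x ≤ ε
  · exact ⟨1, le_rfl, by simp [tsub_eq_zero_of_le hsmall]⟩
  have hlt : birkhoffLimsup T f x - ε < birkhoffLimsup T f x :=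
    ENNReal.sub_lt_self ((birkhoffLimsup_le_one hf1 x).trans_lt ENNReal.one_lt_top).ne
      (pos_of_gt (not_le.1 hsmall)).ne' hε
  obtain ⟨n, hn, hn1⟩ := ((frequently_lt_of_lt_limsup (by isBoundedDefault) hlt).and_eventually
    (eventually_ge_atTop 1)).exists
  refine ⟨n, hn1, ?_⟩
  rw [mul_comm, ← ENNReal.le_div_iff_mul_le (.inl (by positivity)) (.inl (by simp))]
  exact hn.le

theorem birkhoffSum_one_sub (hf1 : ∀ x, f x ≤ 1) (n : ℕ) (x : X) :
    birkhoffSum T (fun y => 1 - f y) n x = n - birkhoffSum T f n x := by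
  refine ENNReal.eq_sub_of_add_eq ((birkhoffSum_le_of_le_one hf1 n x).trans_lt (by simp)).ne ?_
  rw [← birkhoffSum_add']
  simp [birkhoffSum, tsub_add_cancel_of_le (hf1 _)]

theorem birkhoffLimsup_one_sub (hf1 : ∀ x, f x ≤ 1) (x : X) :
    birkhoffLimsup T (fun y => 1 - f y) x = 1 - birkhoffLiminf T f x := by
  rw [birkhoffLimsup, birkhoffLiminf, ← ENNReal.limsup_const_sub _ _ ENNReal.one_ne_top]
  refine limsup_congr ((eventually_ge_atTop 1).mono fun n hn => ?_)
  rw [birkhoffSum_one_sub hf1, ENNReal.sub_div fun _ _ => by positivity,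
    ENNReal.div_self (by positivity) (by simp)]

theorem tendsto_sum_indicator_div_toReal {E : Set X} {x : X} {L : ℝ≥0∞} (hL : L ≠ ∞)
    (h : Tendsto (fun n : ℕ => birkhoffSum T (E.indicator fun _ => (1 : ℝ≥0∞)) n x / n) atTop
      (𝓝 L)) :
    Tendsto (fun n : ℕ => (∑ i ∈ Finset.range n, E.indicator (fun _ => (1 : ℝ)) (T^[i] x)) / n)
      atTop (𝓝 L.toReal) := by
  refine ((ENNReal.tendsto_toReal hL).comp h).congr fun n => ?_
  simp only [Function.comp_apply, ENNReal.toReal_div, ENNReal.toReal_natCast, birkhoffSum]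
  rw [ENNReal.toReal_sum fun i _ => by by_cases hi : T^[i] x ∈ E <;> simp [hi]]
  congr 1
  refine Finset.sum_congr rfl fun i _ => ?_
  by_cases hi : T^[i] x ∈ E <;> simp [hi]

def unstopped (T : X → X) (f ψ : X → ℝ≥0∞) (N : ℕ) : Set X :=
  ⋂ n ∈ Finset.Icc 1 N, {x | birkhoffSum T f n x < n * ψ x}

variable [MeasurableSpace X] {m : Measure X}

theorem measurable_birkhoffSum {g : X → ℝ≥0∞} (hT : Measurable T) (hg : Measurable g) (n : ℕ) :
    Measurable (birkhoffSum T g n) :=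
  Finset.measurable_sum _ fun k _ => hg.comp (hT.iterate k)

theorem measurable_birkhoffLimsup (hT : Measurable T) (hf : Measurable f) :
    Measurable (birkhoffLimsup T f) :=
  .limsup fun n => (measurable_birkhoffSum hT hf n).div_const _

theorem measurable_birkhoffLiminf (hT : Measurable T) (hf : Measurable f) :
    Measurable (birkhoffLiminf T f) :=
  .liminf fun n => (measurable_birkhoffSum hT hf n).div_const _

theorem lintegral_birkhoffSum {g : X → ℝ≥0∞} (hT : MeasurePreserving T m m) (hg : Measurable g)
    (n : ℕ) : ∫⁻ x, birkhoffSum T g n x ∂m = n * ∫⁻ x, g x ∂m := by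
  simp only [birkhoffSum]
  rw [lintegral_finsetSum (f := fun k x => g (T^[k] x)) _
    fun k _ => hg.comp (hT.measurable.iterate k)]
  simp [(hT.iterate _).lintegral_comp hg]

theorem lintegral_le_of_stopping [IsFiniteMeasure m] (hT : MeasurePreserving T m m)
    {ψ g : X → ℝ≥0∞} {N : ℕ} (hψ : Measurable ψ) (hg : Measurable g) (hψ1 : ∀ x, ψ x ≤ 1)
    (hψT : ∀ k x, ψ x ≤ ψ (T^[k] x))
    (hstop : ∀ x, ∃ n ∈ Finset.Icc 1 N, n * ψ x ≤ birkhoffSum T g n x) :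
    ∫⁻ x, ψ x ∂m ≤ ∫⁻ x, g x ∂m := by
  refine ENNReal.le_of_forall_nat_mul_le_mul_add (c := N * m Set.univ)
    (ENNReal.mul_ne_top (by simp) (measure_ne_top _ _)) fun L => ?_
  calc (L : ℝ≥0∞) * ∫⁻ x, ψ x ∂m = ∫⁻ x, L * ψ x ∂m := (lintegral_const_mul _ hψ).symm
    _ ≤ ∫⁻ x, (birkhoffSum T g L x + N) ∂m :=
        lintegral_mono (mul_le_birkhoffSum_add_of_stopping hψ1 hψT hstop L)
    _ = L * ∫⁻ x, g x ∂m + N * m Set.univ := by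
        rw [lintegral_add_right _ measurable_const, lintegral_birkhoffSum hT hg, lintegral_const]

theorem measurableSet_unstopped (hT : Measurable T) (hf : Measurable f) {ψ : X → ℝ≥0∞}
    (hψ : Measurable ψ) (N : ℕ) : MeasurableSet (unstopped T f ψ N) :=
  Finset.measurableSet_biInter _ fun n _ =>
    measurableSet_lt (measurable_birkhoffSum hT hf n) (hψ.const_mul _)

theorem lintegral_le_add_measure_unstopped [IsFiniteMeasure m] (hT : MeasurePreserving T m m)
    {ψ : X → ℝ≥0∞} (hψ : Measurable ψ) (hf : Measurable f) (hψ1 : ∀ x, ψ x ≤ 1)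
    (hψT : ∀ k x, ψ x ≤ ψ (T^[k] x)) {N : ℕ} (hN : 1 ≤ N) :
    ∫⁻ x, ψ x ∂m ≤ ∫⁻ x, f x ∂m + m (unstopped T f ψ N) := by
  set B := unstopped T f ψ N
  have hB : MeasurableSet B := measurableSet_unstopped hT.measurable hf hψ N
  -- adding `1` on `B` makes every point stop by time `N`
  set g : X → ℝ≥0∞ := fun x => f x + B.indicator 1 x
  have hstop : ∀ x, ∃ n ∈ Finset.Icc 1 N, n * ψ x ≤ birkhoffSum T g n x := by
    intro x
    by_cases hx : x ∈ B
    · refine ⟨1, Finset.mem_Icc.2 ⟨le_rfl, hN⟩, ?_⟩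
      simp only [Nat.cast_one, one_mul, birkhoffSum_one, g, Set.indicator_of_mem hx, Pi.one_apply]
      exact (hψ1 x).trans le_add_self
    · simp only [B, unstopped, Set.mem_iInter₂, Set.mem_ofPred_eq, not_forall, not_lt] at hx
      obtain ⟨n, hn, hle⟩ := hx
      exact ⟨n, hn, hle.trans (Finset.sum_le_sum fun k _ => le_self_add)⟩
  calc ∫⁻ x, ψ x ∂m ≤ ∫⁻ x, g x ∂m :=
        lintegral_le_of_stopping hT hψ (hf.add (measurable_one.indicator hB)) hψ1 hψT hstop
    _ = ∫⁻ x, f x ∂m + m B := by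
        rw [lintegral_add_right _ (measurable_one.indicator hB), lintegral_indicator_one hB]

theorem tendsto_measure_unstopped [IsFiniteMeasure m] (hT : Measurable T) (hf : Measurable f)
    {ψ : X → ℝ≥0∞} (hψ : Measurable ψ)
    (hstop : ∀ x, ∃ n, 1 ≤ n ∧ n * ψ x ≤ birkhoffSum T f n x) :
    Tendsto (fun N => m (unstopped T f ψ N)) atTop (𝓝 0) := by
  have hanti : Antitone (unstopped T f ψ) := fun M N hMN =>
    Set.biInter_mono (by intro n; simp only [Finset.coe_Icc, Set.mem_Icc]; omega) fun _ _ => le_rfl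
  have hempty : ⋂ N, unstopped T f ψ N = ∅ := by
    refine Set.eq_empty_of_forall_notMem fun x hx => ?_
    obtain ⟨n, hn1, hn⟩ := hstop x
    exact (Set.mem_iInter₂.1 (Set.mem_iInter.1 hx n) n (by simp [hn1])).not_ge hn
  have := tendsto_measure_iInter_atTop (μ := m)
    (fun N => (measurableSet_unstopped hT hf hψ N).nullMeasurableSet) hanti ⟨0, measure_ne_top _ _⟩
  rwa [hempty, measure_empty] at this

theorem lintegral_birkhoffLimsup_le [IsProbabilityMeasure m] (hT : MeasurePreserving T m m)
    (hf : Measurable f) (hf1 : ∀ x, f x ≤ 1) :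
    ∫⁻ x, birkhoffLimsup T f x ∂m ≤ ∫⁻ x, f x ∂m := by
  refine ENNReal.le_of_forall_pos_le_add fun ε hε _ => ?_
  set η : ℝ≥0∞ := ε / 2
  have hη : η ≠ 0 := by simpa [η] using hε.ne'
  set ψ : X → ℝ≥0∞ := fun x => birkhoffLimsup T f x - η
  have hψ : Measurable ψ := (measurable_birkhoffLimsup hT.measurable hf).sub_const η
  obtain ⟨N, hN, hN1⟩ := (((tendsto_measure_unstopped (m := m) hT.measurable hf hψ
    (exists_mul_le_birkhoffSum hf1 hη)).eventually_lt_const (pos_iff_ne_zero.2 hη)).and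
    (eventually_ge_atTop 1)).exists
  calc ∫⁻ x, birkhoffLimsup T f x ∂m ≤ ∫⁻ x, (ψ x + η) ∂m :=
        lintegral_mono fun x => le_tsub_add
    _ = ∫⁻ x, ψ x ∂m + η := by rw [lintegral_add_right _ measurable_const]; simp
    _ ≤ ∫⁻ x, f x ∂m + η + η := by
        gcongr
        exact (lintegral_le_add_measure_unstopped hT hψ hf
          (fun x => tsub_le_self.trans (birkhoffLimsup_le_one hf1 x))
          (fun k x => tsub_le_tsub_right (birkhoffLimsup_le_birkhoffLimsup_iterate hf1 k x) η)
          hN1).trans (by gcongr)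
    _ = ∫⁻ x, f x ∂m + ε := by rw [add_assoc, ENNReal.add_halves]

theorem lintegral_le_lintegral_birkhoffLiminf [IsProbabilityMeasure m]
    (hT : MeasurePreserving T m m) (hf : Measurable f) (hf1 : ∀ x, f x ≤ 1) :
    ∫⁻ x, f x ∂m ≤ ∫⁻ x, birkhoffLiminf T f x ∂m := by
  have hf_int : ∫⁻ x, f x ∂m ≤ 1 := lintegral_le_const (.of_forall hf1)
  have hliminf1 := birkhoffLiminf_le_one (T := T) hf1
  have key := lintegral_birkhoffLimsup_le (f := fun y => 1 - f y) hT (measurable_const.sub hf)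
    fun _ => tsub_le_self
  simp only [birkhoffLimsup_one_sub hf1] at key
  rw [lintegral_sub (measurable_birkhoffLiminf hT.measurable hf)
      (ne_top_of_le_ne_top ENNReal.one_ne_top (lintegral_le_const (.of_forall hliminf1)))
      (.of_forall hliminf1),
    lintegral_sub hf (ne_top_of_le_ne_top ENNReal.one_ne_top hf_int) (.of_forall hf1),
    lintegral_one, measure_univ] at key
  rwa [ENNReal.sub_le_sub_iff_left hf_int ENNReal.one_ne_top] at key

theorem ae_tendsto_birkhoffSum_div [IsProbabilityMeasure m] (hT : MeasurePreserving T m m)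
    (hf : Measurable f) (hf1 : ∀ x, f x ≤ 1) :
    ∀ᵐ x ∂m, Tendsto (fun n : ℕ => birkhoffSum T f n x / n) atTop (𝓝 (birkhoffLimsup T f x)) := by
  have hlimsup_le : ∫⁻ x, birkhoffLimsup T f x ∂m ≤ ∫⁻ x, birkhoffLiminf T f x ∂m :=
    (lintegral_birkhoffLimsup_le hT hf hf1).trans (lintegral_le_lintegral_birkhoffLiminf hT hf hf1)
  have hfin : ∫⁻ x, birkhoffLiminf T f x ∂m ≠ ∞ := ne_top_of_le_ne_top ENNReal.one_ne_top
    (lintegral_le_const (.of_forall (birkhoffLiminf_le_one hf1)))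
  filter_upwards [ae_eq_of_ae_le_of_lintegral_le (.of_forall birkhoffLiminf_le_birkhoffLimsup)
    hfin (measurable_birkhoffLimsup hT.measurable hf).aemeasurable hlimsup_le] with x hx
  exact tendsto_of_liminf_eq_limsup hx rfl

end PointwiseErgodic

theorem sum_range_reflect_eq_sub {a : ℕ → ℝ} {M n : ℕ} (hM : M ≤ n + 1) :
    ∑ j ∈ Finset.range M, a (n - j) =
      ∑ i ∈ Finset.range (n + 1), a i - ∑ i ∈ Finset.range (n + 1 - M), a i := by
  have hsplit := Finset.sum_range_add a (n + 1 - M) M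
  rw [Nat.sub_add_cancel hM] at hsplit
  rw [hsplit, add_sub_cancel_left, ← Finset.sum_range_reflect]
  refine Finset.sum_congr rfl fun j hj => ?_
  rw [Finset.mem_range] at hj
  congr 1
  omega

theorem Nat.ceil_mul_le_self {δ : ℝ} (hδ1 : δ ≤ 1) (n : ℕ) : ⌈δ * n⌉₊ ≤ n :=
  Nat.ceil_le.2 (mul_le_of_le_one_left n.cast_nonneg hδ1)

theorem sum_indicator_lt_mul_eq_sub {a : ℕ → ℝ} {δ : ℝ} (hδ1 : δ ≤ 1) (n : ℕ) :
    ∑ n' ∈ Finset.range n, {p : ℕ | (p : ℝ) < δ * n}.indicator (fun _ => (1 : ℝ)) n' * a (n - n') =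
      ∑ i ∈ Finset.range (n + 1), a i - ∑ i ∈ Finset.range (n + 1 - ⌈δ * n⌉₊), a i := by
  have hMn := Nat.ceil_mul_le_self hδ1 n
  rw [← sum_range_reflect_eq_sub (by omega)]
  refine (Finset.sum_subset (Finset.range_subset_range.2 hMn) fun j _ hj => ?_).symm.trans
    (Finset.sum_congr rfl fun j hj => ?_)
  · rw [Finset.mem_range, Nat.lt_ceil] at hj
    simp [Set.indicator_of_notMem (show j ∉ {p : ℕ | (p : ℝ) < δ * n} from hj)]
  · rw [Finset.mem_range, Nat.lt_ceil] at hj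
    simp [Set.indicator_of_mem (show j ∈ {p : ℕ | (p : ℝ) < δ * n} from hj)]

theorem tendsto_window_average {a : ℕ → ℝ} {c δ : ℝ} (hδ0 : 0 < δ) (hδ1 : δ < 1)
    (h : Tendsto (fun n : ℕ => (∑ i ∈ Finset.range n, a i) / n) atTop (𝓝 c)) :
    Tendsto (fun n : ℕ => (∑ n' ∈ Finset.range n,
        {p : ℕ | (p : ℝ) < δ * n}.indicator (fun _ => (1 : ℝ)) n' * a (n - n')) / (δ * n))
      atTop (𝓝 c) := by
  set k : ℕ → ℕ := fun n => n + 1 - ⌈δ * n⌉₊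
  have hk_cast (n : ℕ) : (k n : ℝ) = ((n + 1 : ℕ) : ℝ) - ⌈δ * n⌉₊ :=
    Nat.cast_sub ((Nat.ceil_mul_le_self hδ1.le n).trans n.le_succ)
  have hk_top : Tendsto k atTop atTop := by
    refine tendsto_natCast_atTop_iff.1 (tendsto_atTop_mono (fun n => ?_)
      (tendsto_natCast_atTop_atTop.const_mul_atTop (sub_pos.2 hδ1)))
    rw [hk_cast]
    push_cast
    linarith [Nat.ceil_lt_add_one (mul_nonneg hδ0.le n.cast_nonneg)]
  have hsucc : Tendsto (fun n : ℕ => ((n + 1 : ℕ) : ℝ) / n) atTop (𝓝 1) := by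
    have := (tendsto_const_nhds (x := (1 : ℝ))).add tendsto_one_div_atTop_nhds_zero_nat
    rw [add_zero] at this
    refine this.congr' ((eventually_ge_atTop 1).mono fun n hn => ?_)
    have : (n : ℝ) ≠ 0 := by positivity
    push_cast
    field_simp
  have hk_div : Tendsto (fun n : ℕ => (k n : ℝ) / n) atTop (𝓝 (1 - δ)) := by
    simpa only [hk_cast, sub_div, Function.comp_def] using
      hsucc.sub ((tendsto_nat_ceil_mul_div_atTop hδ0.le).comp tendsto_natCast_atTop_atTop)
  have hlim := ((((h.comp (tendsto_add_atTop_nat 1)).mul hsucc).sub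
    ((h.comp hk_top).mul hk_div)).div_const δ)
  rw [show (c * 1 - c * (1 - δ)) / δ = c by field_simp; ring] at hlim
  refine hlim.congr' ((eventually_ge_atTop 1).mono fun n hn => ?_)
  have hk0 : (k n : ℝ) ≠ 0 := by
    have := Nat.ceil_mul_le_self hδ1.le n
    exact_mod_cast (show k n ≠ 0 by simp only [k]; omega)
  simp only [Function.comp_apply, sum_indicator_lt_mul_eq_sub hδ1.le]
  rw [div_mul_div_cancel₀ (by positivity), div_mul_div_cancel₀ hk0, ← sub_div, div_div, mul_comm]

open PointwiseErgodic in
/-- The set of points visiting `E` in the windows `(n(1−δ), n]` with positive lower frequency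
has measure at least `m(E)`. -/
theorem stmt7 {X : Type*} [MeasurableSpace X] (m : Measure X) [IsProbabilityMeasure m]
    (T : X → X) (hT : MeasurePreserving T m m)
    (E : Set X) (hE : MeasurableSet E)
    (δ : ℝ) (hδ0 : 0 < δ) (hδ1 : δ < 1)
    (Estar : Set X)
    (hEstar : Estar = {x : X | 0 < Filter.liminf
      (fun n : ℕ =>
        (∑ n' ∈ Finset.range n,
            ({p : ℕ | (p : ℝ) < δ * n}.indicator (fun _ => (1 : ℝ)) n') *
              (E.indicator (fun _ => (1 : ℝ)) (T^[n - n'] x))) / (δ * n))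
      atTop}) :
    m E ≤ m Estar := by
  set f : X → ℝ≥0∞ := E.indicator fun _ => 1
  have hf : Measurable f := measurable_const.indicator hE
  have hf1 : ∀ x, f x ≤ 1 := fun x =>
    Set.indicator_apply_le' (fun _ => le_rfl) fun _ => zero_le_one
  have hpos_ae : {x | 0 < birkhoffLimsup T f x} ≤ᵐ[m] Estar := by
    filter_upwards [ae_tendsto_birkhoffSum_div hT hf hf1] with x hx hpos
    have hfin := ((birkhoffLimsup_le_one (T := T) hf1 x).trans_lt ENNReal.one_lt_top).ne
    rw [hEstar]
    change 0 < liminf _ atTop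
    rw [(tendsto_window_average hδ0 hδ1 (tendsto_sum_indicator_div_toReal hfin hx)).liminf_eq]
    exact ENNReal.toReal_pos hpos.ne' hfin
  calc m E = ∫⁻ x, f x ∂m := by simp [f, lintegral_indicator_const hE]
    _ ≤ ∫⁻ x, birkhoffLiminf T f x ∂m := lintegral_le_lintegral_birkhoffLiminf hT hf hf1
    _ ≤ ∫⁻ x, birkhoffLimsup T f x ∂m := lintegral_mono birkhoffLiminf_le_birkhoffLimsup
    _ ≤ m {x | 0 < birkhoffLimsup T f x} :=
        lintegral_le_measure_setOf_pos (birkhoffLimsup_le_one hf1)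
    _ ≤ m Estar := measure_mono_ae hpos_ae
end

section
/- Let f : ℤ^d → ℝ≥0 be subadditive with c₁‖λ‖ ≤ f(λ) ≤ c₂‖λ‖ (0 < c₁ ≤ c₂) and let φ : ℝ^d → ℝ≥0 be the asymptotically equivalent homogeneous subadditive function (φ(λ) = inf_{n≥1} f(nλ)/n on ℤ^d, extended by homogeneity and continuity). Then f is inner in the following sense: for every ε > 0 there is R < ∞ such that every λ ∈ ℤ^d can be written as λ = λ₁ + … + λ_n with f(λ_i) ≤ R for all i and f(λ₁) + … + f(λ_n) ≤ (1+ε)·f(λ). -/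
/-- The Euclidean norm of a lattice point of `ℤ^d`. -/
noncomputable def euclNormZ {d : ℕ} (lam : Fin d → ℤ) : ℝ :=
  ‖(WithLp.equiv 2 (Fin d → ℝ)).symm (fun i => (lam i : ℝ))‖

/-- The Euclidean norm on `ℝ^d`. -/
noncomputable def euclNormR {d : ℕ} (v : Fin d → ℝ) : ℝ :=
  ‖(WithLp.equiv 2 (Fin d → ℝ)).symm v‖

/-!
Cut `λ` into `n ≈ ‖λ‖ / L` consecutive lattice steps `⌊(k+1)λ/n⌋ - ⌊kλ/n⌋`, each within
sup-distance `1` of `λ/n`. A subadditive positively homogeneous function on `ℝ^d` is `O(‖·‖)`, so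
every piece has norm `‖λ‖/n + O(1)` and `φ(piece) ≤ φ(λ)/n + O(1)`. For `L` large the pieces lie
where `|f - φ| ≤ δ‖·‖`, hence `∑ f(λᵢ) ≤ φ(λ) + δ‖λ‖ + O(n) ≤ f(λ) + 2δ‖λ‖ + O(‖λ‖/L)`, and
`f ≥ c₁‖·‖` turns this error into `ε f(λ)`. Vectors shorter than `L` form a single piece.
-/

open Finset Filter

lemma le_add_mul_norm_sub {E : Type*} [SeminormedAddCommGroup E] {p : E → ℝ} {C : ℝ}
    (hadd : ∀ v w, p (v + w) ≤ p v + p w) (hC : ∀ v, p v ≤ C * ‖v‖) (v w : E) :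
    p w ≤ p v + C * ‖w - v‖ :=
  calc p w = p (v + (w - v)) := by rw [add_sub_cancel]
    _ ≤ p v + C * ‖w - v‖ := (hadd _ _).trans (add_le_add_right (hC _) _)

theorem exists_le_mul_norm_of_subadditive_of_homogeneous {ι : Type*} [Fintype ι]
    {p : (ι → ℝ) → ℝ} (hadd : ∀ v w, p (v + w) ≤ p v + p w)
    (hhom : ∀ t : ℝ, 0 < t → ∀ v, p (t • v) = t * p v) :
    ∃ C, 0 ≤ C ∧ ∀ v, p v ≤ C * ‖v‖ := by
  classical
  have hzero : p 0 = 0 := by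
    have h := hhom 2 two_pos 0
    rw [smul_zero] at h
    linarith
  set M : ι → ℝ := fun j => max (p (Pi.single j 1)) (p (-Pi.single j 1))
  have hM : ∀ j, 0 ≤ M j := fun j => by
    have h := hadd (Pi.single j 1) (-Pi.single j 1)
    rw [add_neg_cancel, hzero] at h
    rw [le_max_iff]
    by_contra! h'
    linarith
  have hsingle : ∀ j (t : ℝ), p (Pi.single j t) ≤ |t| * M j := by
    intro j t
    obtain rfl | ht := eq_or_ne t 0
    · simp [hzero]
    rcases ht.lt_or_gt with ht | ht
    · have h : Pi.single j t = (-t) • -Pi.single j (1 : ℝ) := by simp [← Pi.single_smul']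
      rw [h, hhom _ (neg_pos.2 ht), abs_of_neg ht]
      exact mul_le_mul_of_nonneg_left (le_max_right _ _) (neg_pos.2 ht).le
    · have h : Pi.single j t = t • Pi.single j (1 : ℝ) := by simp [← Pi.single_smul']
      rw [h, hhom _ ht, abs_of_pos ht]
      exact mul_le_mul_of_nonneg_left (le_max_left _ _) ht.le
  refine ⟨∑ j, M j, sum_nonneg fun j _ => hM j, fun v => ?_⟩
  calc p v = p (∑ j, Pi.single j (v j)) := by rw [univ_sum_single]
    _ ≤ ∑ j, p (Pi.single j (v j)) := le_sum_of_subadditive p hzero.le hadd _ _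
    _ ≤ ∑ j, ‖v‖ * M j := sum_le_sum fun j _ =>
        (hsingle j _).trans (mul_le_mul_of_nonneg_right (norm_le_pi_norm v j) (hM j))
    _ = (∑ j, M j) * ‖v‖ := by rw [← mul_sum, mul_comm]

lemma abs_floor_add_sub_floor_sub_le (a x : ℝ) : |((⌊a + x⌋ - ⌊a⌋ : ℤ) : ℝ) - x| ≤ 1 := by
  have := Int.floor_le (a + x)
  have := Int.lt_floor_add_one (a + x)
  have := Int.floor_le a
  have := Int.lt_floor_add_one a
  rw [abs_le]
  push_cast
  constructor <;> linarith

theorem exists_sum_eq_norm_sub_inv_smul_le_one {ι : Type*} [Fintype ι] (lam : ι → ℤ) {n : ℕ}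
    (hn : n ≠ 0) :
    ∃ pieces : Fin n → ι → ℤ, ∑ i, pieces i = lam ∧
      ∀ i, ‖(fun j => (pieces i j : ℝ)) - (n : ℝ)⁻¹ • fun j => (lam j : ℝ)‖ ≤ 1 := by
  set g : ℕ → ι → ℤ := fun k j => ⌊(k : ℝ) * lam j / n⌋
  refine ⟨fun i => g (i + 1) - g i, ?_, fun i => ?_⟩
  · rw [Fin.sum_univ_eq_sum_range (fun k => g (k + 1) - g k), sum_range_sub]
    ext j
    simp [g, hn]
  · refine (pi_norm_le_iff_of_nonneg zero_le_one).2 fun j => ?_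
    have h := abs_floor_add_sub_floor_sub_le ((i : ℝ) * lam j / n) (lam j / n)
    simpa [g, add_mul, add_div, div_eq_inv_mul, mul_add] using h

lemma exists_nat_mul_le_and_div_le_two_mul {L N : ℝ} (hL : 0 < L) (hLN : L ≤ N) :
    ∃ n : ℕ, 0 < n ∧ n * L ≤ N ∧ N / n ≤ 2 * L := by
  have hn : 0 < ⌊N / L⌋₊ := Nat.floor_pos.2 ((one_le_div hL).2 hLN)
  have hn' : (1 : ℝ) ≤ ⌊N / L⌋₊ := Nat.one_le_cast.2 hn
  have hlt := Nat.lt_floor_add_one (N / L)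
  rw [div_lt_iff₀ hL] at hlt
  refine ⟨⌊N / L⌋₊, hn, (le_div_iff₀ hL).1 (Nat.floor_le (div_nonneg (hL.le.trans hLN) hL.le)), ?_⟩
  rw [div_le_iff₀ (by positivity)]
  nlinarith

section EuclideanNorm

variable {d : ℕ}

lemma euclNormZ_eq_euclNormR (lam : Fin d → ℤ) :
    euclNormZ lam = euclNormR fun i => (lam i : ℝ) := rfl

@[simp]
lemma euclNormZ_zero : euclNormZ (0 : Fin d → ℤ) = 0 := by
  simp [euclNormZ, Pi.zero_def]

lemma euclNormZ_nonneg (lam : Fin d → ℤ) : 0 ≤ euclNormZ lam := norm_nonneg _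

lemma euclNormR_add_le (v w : Fin d → ℝ) : euclNormR (v + w) ≤ euclNormR v + euclNormR w :=
  norm_add_le (WithLp.toLp 2 v) (WithLp.toLp 2 w)

lemma euclNormR_smul (t : ℝ) (v : Fin d → ℝ) : euclNormR (t • v) = |t| * euclNormR v :=
  (norm_smul t (WithLp.toLp 2 v)).trans (by rw [Real.norm_eq_abs]; rfl)

lemma abs_euclNormR_sub_le (v w : Fin d → ℝ) :
    |euclNormR v - euclNormR w| ≤ euclNormR (v - w) :=
  abs_norm_sub_norm_le (WithLp.toLp 2 v) (WithLp.toLp 2 w)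

end EuclideanNorm

section Decomposition

variable {d : ℕ} {f : (Fin d → ℤ) → ℝ} {φ : (Fin d → ℝ) → ℝ} {A B δ R₀ t : ℝ}

lemma abs_euclNormZ_sub_le_of_near (hA0 : 0 ≤ A) (hA : ∀ v : Fin d → ℝ, euclNormR v ≤ A * ‖v‖)
    (ht : 0 < t) {lam w : Fin d → ℤ}
    (hw : ‖(fun i => (w i : ℝ)) - t • fun i => (lam i : ℝ)‖ ≤ 1) :
    |euclNormZ w - t * euclNormZ lam| ≤ A := by
  rw [euclNormZ_eq_euclNormR, euclNormZ_eq_euclNormR, ← abs_of_pos ht, ← euclNormR_smul]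
  calc _ ≤ euclNormR _ := abs_euclNormR_sub_le _ _
    _ ≤ A * ‖(fun i => (w i : ℝ)) - t • fun i => (lam i : ℝ)‖ := hA _
    _ ≤ A := mul_le_of_le_one_right hA0 hw

lemma apply_le_of_near (hφsub : ∀ v w : Fin d → ℝ, φ (v + w) ≤ φ v + φ w)
    (hφhom : ∀ t : ℝ, 0 < t → ∀ v : Fin d → ℝ, φ (t • v) = t * φ v)
    (hA0 : 0 ≤ A) (hA : ∀ v : Fin d → ℝ, euclNormR v ≤ A * ‖v‖)
    (hB0 : 0 ≤ B) (hB : ∀ v, φ v ≤ B * ‖v‖) (hδ : 0 ≤ δ)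
    (hR₀ : ∀ lam : Fin d → ℤ,
      R₀ ≤ euclNormZ lam → |f lam - φ (fun i => (lam i : ℝ))| ≤ δ * euclNormZ lam)
    (ht : 0 < t) {lam w : Fin d → ℤ}
    (hw : ‖(fun i => (w i : ℝ)) - t • fun i => (lam i : ℝ)‖ ≤ 1) (hR : R₀ ≤ euclNormZ w) :
    f w ≤ t * φ (fun i => (lam i : ℝ)) + B + δ * (t * euclNormZ lam + A) := by
  have hfw := (le_abs_self _).trans (hR₀ w hR)
  have hφw : φ (fun i => (w i : ℝ)) ≤ t * φ (fun i => (lam i : ℝ)) + B := by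
    rw [← hφhom t ht]
    exact (le_add_mul_norm_sub hφsub hB _ _).trans
      (add_le_add_right (mul_le_of_le_one_right hB0 hw) _)
  have hw_norm : δ * euclNormZ w ≤ δ * (t * euclNormZ lam + A) :=
    mul_le_mul_of_nonneg_left (by linarith [(abs_le.1
      (abs_euclNormZ_sub_le_of_near hA0 hA ht hw)).2]) hδ
  linarith

lemma sum_apply_le_of_near (hφsub : ∀ v w : Fin d → ℝ, φ (v + w) ≤ φ v + φ w)
    (hφhom : ∀ t : ℝ, 0 < t → ∀ v : Fin d → ℝ, φ (t • v) = t * φ v)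
    (hA0 : 0 ≤ A) (hA : ∀ v : Fin d → ℝ, euclNormR v ≤ A * ‖v‖)
    (hB0 : 0 ≤ B) (hB : ∀ v, φ v ≤ B * ‖v‖) (hδ : 0 ≤ δ)
    (hR₀ : ∀ lam : Fin d → ℤ,
      R₀ ≤ euclNormZ lam → |f lam - φ (fun i => (lam i : ℝ))| ≤ δ * euclNormZ lam)
    (lam : Fin d → ℤ) {n : ℕ} (hn : 0 < n) (pieces : Fin n → Fin d → ℤ)
    (hnear : ∀ i, ‖(fun j => (pieces i j : ℝ)) - (n : ℝ)⁻¹ • fun j => (lam j : ℝ)‖ ≤ 1)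
    (hlarge : R₀ + A ≤ euclNormZ lam / n) :
    ∑ i, f (pieces i) ≤ f lam + 2 * δ * euclNormZ lam + n * (B + δ * A) := by
  set N := euclNormZ lam
  have hn' : (0 : ℝ) < n := Nat.cast_pos.2 hn
  have hpiece : ∀ i, f (pieces i) ≤ (n : ℝ)⁻¹ * φ (fun j => (lam j : ℝ)) + B
      + δ * ((n : ℝ)⁻¹ * N + A) := fun i =>
    apply_le_of_near hφsub hφhom hA0 hA hB0 hB hδ hR₀ (inv_pos.2 hn') (hnear i) (by
      linarith [(abs_le.1 (abs_euclNormZ_sub_le_of_near hA0 hA (inv_pos.2 hn') (hnear i))).1,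
        div_eq_inv_mul N n])
  have hφlam : φ (fun j => (lam j : ℝ)) ≤ f lam + δ * N := by
    have hN : N / n ≤ N := div_le_self (euclNormZ_nonneg lam) (Nat.one_le_cast.2 hn)
    linarith [(abs_le.1 (hR₀ lam (by linarith))).1]
  calc ∑ i, f (pieces i)
      ≤ ∑ _i : Fin n, ((n : ℝ)⁻¹ * φ (fun j => (lam j : ℝ)) + B + δ * ((n : ℝ)⁻¹ * N + A)) :=
        sum_le_sum fun i _ => hpiece i
    _ = φ (fun j => (lam j : ℝ)) + δ * N + n * (B + δ * A) := by
        rw [sum_const, card_univ, Fintype.card_fin, nsmul_eq_mul]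
        field_simp
        ring
    _ ≤ f lam + 2 * δ * N + n * (B + δ * A) := by linarith

lemma exists_decomposition_of_scale_le (hφsub : ∀ v w : Fin d → ℝ, φ (v + w) ≤ φ v + φ w)
    (hφhom : ∀ t : ℝ, 0 < t → ∀ v : Fin d → ℝ, φ (t • v) = t * φ v)
    (hA0 : 0 ≤ A) (hA : ∀ v : Fin d → ℝ, euclNormR v ≤ A * ‖v‖)
    (hB0 : 0 ≤ B) (hB : ∀ v, φ v ≤ B * ‖v‖) (hδ : 0 ≤ δ)
    (hR₀ : ∀ lam : Fin d → ℤ,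
      R₀ ≤ euclNormZ lam → |f lam - φ (fun i => (lam i : ℝ))| ≤ δ * euclNormZ lam)
    {L : ℝ} (hL0 : 0 < L) (hLR : R₀ + A ≤ L) {lam : Fin d → ℤ} (hLN : L ≤ euclNormZ lam) :
    ∃ (n : ℕ) (pieces : Fin n → Fin d → ℤ), ∑ i, pieces i = lam ∧
      (∀ i, euclNormZ (pieces i) ≤ 2 * L + A) ∧
      ∑ i, f (pieces i) ≤ f lam + 2 * δ * euclNormZ lam + euclNormZ lam / L * (B + δ * A) := by
  obtain ⟨n, hn, hnL, hNn⟩ := exists_nat_mul_le_and_div_le_two_mul hL0 hLN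
  have hn' : (0 : ℝ) < n := Nat.cast_pos.2 hn
  obtain ⟨pieces, hsum, hnear⟩ := exists_sum_eq_norm_sub_inv_smul_le_one lam hn.ne'
  refine ⟨n, pieces, hsum, fun i => ?_, ?_⟩
  · have := (abs_le.1 (abs_euclNormZ_sub_le_of_near hA0 hA (inv_pos.2 hn') (hnear i))).2
    rw [← div_eq_inv_mul] at this
    linarith
  · have hnL' : (n : ℝ) ≤ euclNormZ lam / L := (le_div_iff₀ hL0).2 hnL
    refine (sum_apply_le_of_near hφsub hφhom hA0 hA hB0 hB hδ hR₀ lam hn pieces hnear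
      (hLR.trans ((le_div_iff₀ hn').2 (by linarith)))).trans ?_
    gcongr

lemma apply_le_max_of_euclNormZ_le {c r : ℝ} (hc : 0 ≤ c)
    (hup : ∀ lam : Fin d → ℤ, lam ≠ 0 → f lam ≤ c * euclNormZ lam) {lam : Fin d → ℤ}
    (h : euclNormZ lam ≤ r) : f lam ≤ max (f 0) (c * r) := by
  obtain rfl | hne := eq_or_ne lam 0
  · exact le_max_left _ _
  · exact le_max_of_le_right ((hup lam hne).trans (mul_le_mul_of_nonneg_left h hc))

end Decomposition

theorem stmt16_general {d : ℕ} (c₁ c₂ : ℝ) (hc₁ : 0 < c₁) (hc : c₁ ≤ c₂)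
    (f : (Fin d → ℤ) → ℝ)
    (hf0 : ∀ lam, 0 ≤ f lam)
    (hlow : ∀ lam : Fin d → ℤ, lam ≠ 0 → c₁ * euclNormZ lam ≤ f lam)
    (hup : ∀ lam : Fin d → ℤ, lam ≠ 0 → f lam ≤ c₂ * euclNormZ lam)
    (φ : (Fin d → ℝ) → ℝ)
    (hφsub : ∀ v w : Fin d → ℝ, φ (v + w) ≤ φ v + φ w)
    (hφhom : ∀ t : ℝ, 0 < t → ∀ v : Fin d → ℝ, φ (t • v) = t * φ v)
    (hasymp : ∀ ε : ℝ, 0 < ε → ∃ R : ℝ, ∀ lam : Fin d → ℤ,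
      R ≤ euclNormZ lam → |f lam - φ (fun i => (lam i : ℝ))| ≤ ε * euclNormZ lam) :
    ∀ ε : ℝ, 0 < ε → ∃ R : ℝ, ∀ lam : Fin d → ℤ,
      ∃ (n : ℕ) (pieces : Fin n → Fin d → ℤ),
        (∑ i, pieces i) = lam ∧
        (∀ i, f (pieces i) ≤ R) ∧
        (∑ i, f (pieces i)) ≤ (1 + ε) * f lam := by
  intro ε hε
  obtain ⟨A, hA0, hA⟩ := exists_le_mul_norm_of_subadditive_of_homogeneous (p := euclNormR (d := d))
    euclNormR_add_le fun t ht v => by rw [euclNormR_smul, abs_of_pos ht]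
  obtain ⟨B, hB0, hB⟩ := exists_le_mul_norm_of_subadditive_of_homogeneous hφsub hφhom
  set δ := ε * c₁ / 4 with hδ_def
  have hδ : 0 < δ := by positivity
  obtain ⟨R₀, hR₀⟩ := hasymp δ hδ
  obtain ⟨L, hL0, hLR, hLB⟩ := ((eventually_gt_atTop 0).and ((eventually_ge_atTop (R₀ + A)).and
    (eventually_ge_atTop (2 * (B + δ * A) / (ε * c₁))))).exists
  refine ⟨max (f 0) (c₂ * (2 * L + A)), fun lam => ?_⟩
  have hbound : ∀ {w}, euclNormZ w ≤ 2 * L + A → f w ≤ max (f 0) (c₂ * (2 * L + A)) :=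
    apply_le_max_of_euclNormZ_le (hc₁.trans_le hc).le hup
  set N := euclNormZ lam
  by_cases hsmall : N < L
  · refine ⟨1, fun _ => lam, by simp, fun _ => hbound (by linarith), ?_⟩
    simpa using le_mul_of_one_le_left (hf0 lam) (by linarith)
  obtain ⟨n, pieces, hsum, hpieces, hsum_le⟩ := exists_decomposition_of_scale_le hφsub hφhom
    hA0 hA hB0 hB hδ.le hR₀ hL0 hLR (not_lt.1 hsmall)
  refine ⟨n, pieces, hsum, fun i => hbound (hpieces i), ?_⟩
  have hlam : lam ≠ 0 := fun h => by simp [N, h] at hsmall; linarith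
  have hscale : N / L * (B + δ * A) ≤ ε * c₁ * N / 2 := by
    rw [div_le_iff₀ (by positivity)] at hLB
    rw [div_mul_eq_mul_div, div_le_iff₀ hL0]
    nlinarith [euclNormZ_nonneg lam]
  calc ∑ i, f (pieces i) ≤ f lam + 2 * δ * N + N / L * (B + δ * A) := hsum_le
    _ ≤ f lam + ε * (c₁ * N) := by linarith [show 2 * δ * N = ε * c₁ * N / 2 by rw [hδ_def]; ring]
    _ ≤ (1 + ε) * f lam := by nlinarith [hlow lam hlam]

/-- A subadditive `f : ℤ^d → ℝ≥0`, bi-Lipschitz to the Euclidean norm and asymptotically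
equivalent to a positively homogeneous subadditive `φ : ℝ^d → ℝ≥0`, is inner: for every
`ε > 0` there is `R < ∞` such that every `λ` decomposes as `λ = λ₁ + … + λ_n` with
`f(λᵢ) ≤ R` and `∑ f(λᵢ) ≤ (1+ε) f(λ)`. -/
theorem stmt16 {d : ℕ} (c₁ c₂ : ℝ) (hc₁ : 0 < c₁) (hc : c₁ ≤ c₂)
    (f : (Fin d → ℤ) → ℝ)
    (hf0 : ∀ lam, 0 ≤ f lam)
    (hsub : ∀ x y : Fin d → ℤ, f (x + y) ≤ f x + f y)
    (hlow : ∀ lam : Fin d → ℤ, lam ≠ 0 → c₁ * euclNormZ lam ≤ f lam)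
    (hup : ∀ lam : Fin d → ℤ, lam ≠ 0 → f lam ≤ c₂ * euclNormZ lam)
    (φ : (Fin d → ℝ) → ℝ)
    (hφ0 : ∀ v, 0 ≤ φ v)
    (hφsub : ∀ v w : Fin d → ℝ, φ (v + w) ≤ φ v + φ w)
    (hφhom : ∀ t : ℝ, 0 < t → ∀ v : Fin d → ℝ, φ (t • v) = t * φ v)
    (hasymp : ∀ ε : ℝ, 0 < ε → ∃ R : ℝ, ∀ lam : Fin d → ℤ,
      R ≤ euclNormZ lam → |f lam - φ (fun i => (lam i : ℝ))| ≤ ε * euclNormZ lam) :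
    ∀ ε : ℝ, 0 < ε → ∃ R : ℝ, ∀ lam : Fin d → ℤ,
      ∃ (n : ℕ) (pieces : Fin n → Fin d → ℤ),
        (∑ i, pieces i) = lam ∧
        (∀ i, f (pieces i) ≤ R) ∧
        (∑ i, f (pieces i)) ≤ (1 + ε) * f lam :=
  stmt16_general c₁ c₂ hc₁ hc f hf0 hlow hup φ hφsub hφhom hasymp
end

section
/- Let (X,m) be a probability space with an ergodic measure-preserving ℤ-action generated by T. For measurable E ⊆ X with m(E) > 0 and 0 < δ < 1, and any ε > 0, there exists N ∈ ℕ such that the set E*_N := { x ∈ X : for all n ≥ N, there exists n' with 0 ≤ n' < δn and T^{n−n'} x ∈ E } satisfies m(E*_N) > m(E) − ε. -/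
/-!
For a.e. `x` the frequency of visits of the orbit of `x` to `E` tends to `m(E) > 0` (Birkhoff's
ergodic theorem for `1_E`). Then the number of visits during `(n(1 - δ), n]` is about
`δ n m(E) > 0` for large `n`, so almost every point lies in some `E*_N`, and by continuity from
below `m(E*_N) → 1`.

The ergodic theorem is proved for `[0,1]`-valued `f` following Katznelson and Weiss. The lower
limit `φ` of the Birkhoff averages is `T`-invariant. Given `ε > 0`, outside a set `B` of measure
`< ε` every point starts a block of bounded length on which the average of `f` is at most
`φ + ε`; cutting an orbit segment into such blocks and single points of `B` and integrating gives
`∫ f ≤ ∫ φ + 3ε`. Applied to `1 - f` this bounds the upper limit, and ergodicity makes both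
limits constant.
-/

open Filter MeasureTheory Set Topology

theorem Real.liminf_add_of_left_tendsto_zero {ι : Type*} {l : Filter ι} [NeBot l] {u v : ι → ℝ}
    (hu : Tendsto u l (𝓝 0)) (hv : IsBoundedUnder (· ≤ ·) l v)
    (hv' : IsBoundedUnder (· ≥ ·) l v) :
    liminf (u + v) l = liminf v l := by
  apply le_antisymm
  · simpa [hu.limsup_eq] using
      liminf_add_le hu.isBoundedUnder_ge hu.isBoundedUnder_le hv' hv.isCoboundedUnder_ge
  · simpa [hu.liminf_eq] using
      le_liminf_add hu.isBoundedUnder_ge hu.isBoundedUnder_le hv' hv.isCoboundedUnder_ge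

section BirkhoffAverage

variable {X : Type*} {T : X → X} {f : X → ℝ}

theorem birkhoffAverage_mem_Icc (hf : ∀ x, f x ∈ Icc 0 1) (n : ℕ) (x : X) :
    birkhoffAverage ℝ T f n x ∈ Icc 0 1 := by
  rcases eq_or_ne n 0 with rfl | hn
  · simp
  have hn' : (0 : ℝ) < n := by positivity
  have hsum : birkhoffSum T f n x ∈ Icc 0 (n : ℝ) := by
    constructor
    · exact Finset.sum_nonneg fun k _ => (hf _).1
    · simpa [birkhoffSum] using Finset.sum_le_sum fun k (_ : k ∈ Finset.range n) => (hf (T^[k] x)).2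
  rw [birkhoffAverage, smul_eq_mul, ← div_eq_inv_mul]
  exact ⟨div_nonneg hsum.1 hn'.le, div_le_one_of_le₀ hsum.2 hn'.le⟩

theorem birkhoffAverage_one_sub {n : ℕ} (hn : n ≠ 0) (x : X) :
    birkhoffAverage ℝ T (fun y => 1 - f y) n x = 1 - birkhoffAverage ℝ T f n x := by
  simp [birkhoffAverage, birkhoffSum, Finset.sum_sub_distrib, mul_sub, hn]

noncomputable def birkhoffLiminf (T : X → X) (f : X → ℝ) (x : X) : ℝ :=
  liminf (fun n => birkhoffAverage ℝ T f n x) atTop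

section UnitInterval

variable (hf : ∀ x, f x ∈ Icc 0 1)
include hf

theorem isBoundedUnder_le_birkhoffAverage (x : X) :
    IsBoundedUnder (· ≤ ·) atTop (fun n => birkhoffAverage ℝ T f n x) :=
  isBoundedUnder_of ⟨1, fun n => (birkhoffAverage_mem_Icc hf n x).2⟩

theorem isBoundedUnder_ge_birkhoffAverage (x : X) :
    IsBoundedUnder (· ≥ ·) atTop (fun n => birkhoffAverage ℝ T f n x) :=
  isBoundedUnder_of ⟨0, fun n => (birkhoffAverage_mem_Icc hf n x).1⟩

theorem birkhoffLiminf_nonneg (x : X) : 0 ≤ birkhoffLiminf T f x :=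
  le_liminf_of_le (isBoundedUnder_le_birkhoffAverage hf x).isCoboundedUnder_ge
    (Eventually.of_forall fun n => (birkhoffAverage_mem_Icc hf n x).1)

theorem birkhoffLiminf_le_one (x : X) : birkhoffLiminf T f x ≤ 1 :=
  liminf_le_of_le (isBoundedUnder_ge_birkhoffAverage hf x)
    fun _ h => (h.exists.elim fun n hn => hn.trans (birkhoffAverage_mem_Icc hf n x).2)

theorem birkhoffLiminf_comp : birkhoffLiminf T f ∘ T = birkhoffLiminf T f := funext fun x => by
  have hbdd : Bornology.IsBounded (range f) :=
    Metric.isBounded_Icc (0 : ℝ) 1 |>.subset (range_subset_iff.2 hf)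
  have h := Real.liminf_add_of_left_tendsto_zero
    (tendsto_birkhoffAverage_apply_sub_birkhoffAverage' ℝ hbdd T x)
    (isBoundedUnder_le_birkhoffAverage (T := T) hf x) (isBoundedUnder_ge_birkhoffAverage hf x)
  simpa only [Function.comp_apply, birkhoffLiminf, Pi.add_def, sub_add_cancel] using h

end UnitInterval

theorem measurable_birkhoffLiminf [MeasurableSpace X] (hT : Measurable T) (hf : Measurable f) :
    Measurable (birkhoffLiminf T f) :=
  Measurable.liminf fun n =>
    (Finset.measurable_sum (Finset.range n) fun k _ => hf.comp (hT.iterate k)).const_smul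
      ((n : ℝ)⁻¹)

theorem birkhoffSum_le_add_birkhoffSum_indicator {B : Set X} {c : X → ℝ} {M : ℕ}
    (hf : ∀ x, f x ≤ 1) (hc : c ∘ T = c) (hc0 : ∀ x, 0 ≤ c x)
    (hB : ∀ x ∉ B, ∃ k, 0 < k ∧ k ≤ M ∧ birkhoffSum T f k x ≤ k * c x) (N : ℕ) (x : X) :
    birkhoffSum T f N x ≤ N * c x + birkhoffSum T (B.indicator 1) N x + M := by
  have hG : ∀ n y, 0 ≤ birkhoffSum T (B.indicator (1 : X → ℝ)) n y := fun n y =>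
    Finset.sum_nonneg fun k _ => indicator_nonneg (fun _ _ => zero_le_one) _
  induction N using Nat.strong_induction_on generalizing x with
  | _ N ih =>
  by_cases hx : x ∈ B
  · -- a bad point costs at most `1`, which the indicator pays for
    rcases N with _ | N
    · simp
    have hstep := ih N N.lt_succ_self (T x)
    rw [show c (T x) = c x from congrFun hc x] at hstep
    rw [birkhoffSum_succ', birkhoffSum_succ', indicator_of_mem hx, Pi.one_apply]
    push_cast
    linarith [hf x, hc0 x]
  obtain ⟨k, hk0, hkM, hk⟩ := hB x hx
  by_cases hkN : k ≤ N
  · -- a good block of length `k` is followed by the orbit of `T^[k] x`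
    have hstep := ih (N - k) (by omega) (T^[k] x)
    rw [← Function.comp_apply (f := c), Function.iterate_invariant hc] at hstep
    obtain ⟨j, rfl⟩ := Nat.exists_eq_add_of_le hkN
    rw [Nat.add_sub_cancel_left] at hstep
    rw [birkhoffSum_add, birkhoffSum_add (g := B.indicator 1)]
    push_cast
    linarith [hG k x]
  · have hsum : birkhoffSum T f N x ≤ N := by
      simpa [birkhoffSum] using Finset.sum_le_sum fun k (_ : k ∈ Finset.range N) => hf (T^[k] x)
    have hNM : (N : ℝ) ≤ M := by exact_mod_cast (not_le.1 hkN).le.trans hkM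
    nlinarith [hG N x, mul_nonneg (Nat.cast_nonneg N) (hc0 x)]

end BirkhoffAverage

section Integral

variable {X : Type*} [MeasurableSpace X] {m : Measure X} {T : X → X}

theorem MeasureTheory.MeasurePreserving.integrable_birkhoffSum (hT : MeasurePreserving T m m)
    {g : X → ℝ} (hg : Integrable g m) (n : ℕ) : Integrable (birkhoffSum T g n) m :=
  integrable_finsetSum _ fun k _ => (hT.iterate k).integrable_comp_of_integrable hg

theorem MeasureTheory.MeasurePreserving.integral_birkhoffSum (hT : MeasurePreserving T m m)
    {g : X → ℝ} (hg : Integrable g m) (n : ℕ) :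
    ∫ x, birkhoffSum T g n x ∂m = n * ∫ x, g x ∂m := by
  have hcomp : ∀ k, ∫ x, g (T^[k] x) ∂m = ∫ x, g x ∂m := fun k => by
    rw [← integral_map (hT.iterate k).aemeasurable
      (by rw [(hT.iterate k).map_eq]; exact hg.aestronglyMeasurable), (hT.iterate k).map_eq]
  simp only [birkhoffSum]
  rw [integral_finsetSum (f := fun k x => g (T^[k] x)) _
    fun k _ => (hT.iterate k).integrable_comp_of_integrable hg]
  simp [hcomp]

variable {f : X → ℝ}

theorem integrable_of_forall_mem_Icc [IsFiniteMeasure m] (hfm : Measurable f)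
    (hf : ∀ x, f x ∈ Icc 0 1) : Integrable f m :=
  .of_bound hfm.aestronglyMeasurable 1 <| ae_of_all _ fun x => by
    rw [Real.norm_eq_abs, abs_le]
    exact ⟨by linarith [(hf x).1], (hf x).2⟩

theorem exists_measureReal_lt_forall_notMem_birkhoffSum_le [IsFiniteMeasure m]
    (hT : Measurable T) (hfm : Measurable f) (hf : ∀ x, f x ∈ Icc 0 1) {ε : ℝ} (hε : 0 < ε) :
    ∃ (M : ℕ) (B : Set X), MeasurableSet B ∧ m.real B < ε ∧
      ∀ x ∉ B, ∃ k, 0 < k ∧ k ≤ M ∧ birkhoffSum T f k x ≤ k * (birkhoffLiminf T f x + ε) := by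
  set B : ℕ → Set X := fun M =>
    {x | ∀ k, 0 < k → k ≤ M → k * (birkhoffLiminf T f x + ε) < birkhoffSum T f k x}
  have hB_meas : ∀ M, MeasurableSet (B M) := fun M => by
    simp only [B, ofPred_forall]
    refine .iInter fun k => .iInter fun _ => .iInter fun _ => measurableSet_lt ?_ ?_
    · exact measurable_const.mul ((measurable_birkhoffLiminf hT hfm).add_const ε)
    · exact Finset.measurable_sum _ fun i _ => hfm.comp (hT.iterate i)
  have hB_empty : ⋂ M, B M = ∅ := by
    refine eq_empty_of_forall_notMem fun x hx => ?_
    obtain ⟨k, hk, hk0⟩ := ((frequently_lt_of_liminf_lt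
      (isBoundedUnder_le_birkhoffAverage hf x).isCoboundedUnder_ge
      (lt_add_of_pos_right (birkhoffLiminf T f x) hε)).and_eventually
      (eventually_gt_atTop 0)).exists
    have hbad := mem_iInter.1 hx k k hk0 le_rfl
    rw [birkhoffAverage, smul_eq_mul, inv_mul_lt_iff₀ (by exact_mod_cast hk0)] at hk
    linarith
  have hB_lim := tendsto_measure_iInter_atTop (fun M => (hB_meas M).nullMeasurableSet)
    (fun M M' hMM' x hx k hk hkM => hx k hk (hkM.trans hMM')) ⟨0, measure_ne_top m _⟩
  rw [hB_empty, measure_empty] at hB_lim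
  obtain ⟨M, hM⟩ := (hB_lim.eventually (gt_mem_nhds (ENNReal.ofReal_pos.2 hε))).exists
  exact ⟨M, B M, hB_meas M, ENNReal.toReal_lt_of_lt_ofReal hM, fun x hx => by simpa [B] using hx⟩

variable [IsProbabilityMeasure m]

theorem MeasureTheory.MeasurePreserving.integral_le_integral_birkhoffLiminf
    (hT : MeasurePreserving T m m) (hfm : Measurable f) (hf : ∀ x, f x ∈ Icc 0 1) :
    ∫ x, f x ∂m ≤ ∫ x, birkhoffLiminf T f x ∂m := by
  set φ := birkhoffLiminf T f
  have hφi : Integrable φ m := integrable_of_forall_mem_Icc (measurable_birkhoffLiminf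
    hT.measurable hfm) fun x => ⟨birkhoffLiminf_nonneg hf x, birkhoffLiminf_le_one hf x⟩
  have hfi : Integrable f m := integrable_of_forall_mem_Icc hfm hf
  refine le_of_forall_pos_le_add fun η hη => ?_
  obtain ⟨ε, hε, rfl⟩ : ∃ ε, 0 < ε ∧ η = 3 * ε := ⟨η / 3, by positivity, by ring⟩
  obtain ⟨M, B, hB_meas, hB, hB_good⟩ :=
    exists_measureReal_lt_forall_notMem_birkhoffSum_le hT.measurable hfm hf (m := m) hε
  obtain ⟨N, hN, hMN⟩ : ∃ N : ℕ, 0 < (N : ℝ) ∧ (M : ℝ) ≤ N * ε := by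
    obtain ⟨N, hN⟩ := exists_nat_ge ((M : ℝ) / ε)
    refine ⟨N + 1, by positivity, ?_⟩
    rw [div_le_iff₀ hε] at hN
    push_cast
    nlinarith
  have hcover := birkhoffSum_le_add_birkhoffSum_indicator (c := fun x => φ x + ε)
    (fun x => (hf x).2) (funext fun x => congrArg (· + ε) (congrFun (birkhoffLiminf_comp hf) x))
    (fun x => by linarith [birkhoffLiminf_nonneg (T := T) hf x]) hB_good N
  have hind : Integrable (B.indicator (1 : X → ℝ)) m := (integrable_const (1 : ℝ)).indicator hB_meas
  have hφε : Integrable (fun x => (N : ℝ) * (φ x + ε)) m :=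
    (hφi.add (integrable_const ε)).const_mul _
  have hrhs : Integrable (fun x => N * (φ x + ε) + birkhoffSum T (B.indicator 1) N x) m :=
    hφε.add (hT.integrable_birkhoffSum hind N)
  suffices (N : ℝ) * ∫ x, f x ∂m ≤ N * (∫ x, φ x ∂m + 3 * ε) from le_of_mul_le_mul_left this hN
  calc (N : ℝ) * ∫ x, f x ∂m = ∫ x, birkhoffSum T f N x ∂m := (hT.integral_birkhoffSum hfi N).symm
    _ ≤ ∫ x, (N * (φ x + ε) + birkhoffSum T (B.indicator 1) N x + M) ∂m :=
      integral_mono (hT.integrable_birkhoffSum hfi N) (hrhs.add (integrable_const _)) hcover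
    _ = N * (∫ x, φ x ∂m + ε) + N * m.real B + M := by
      rw [integral_add hrhs (integrable_const _),
        integral_add hφε (hT.integrable_birkhoffSum hind N), integral_const_mul,
        integral_add hφi (integrable_const ε), hT.integral_birkhoffSum hind,
        integral_indicator_one hB_meas]
      simp
    _ ≤ N * (∫ x, φ x ∂m + 3 * ε) := by nlinarith

end Integral

section Ergodic

variable {X : Type*} [MeasurableSpace X] {m : Measure X} [IsProbabilityMeasure m] {T : X → X}
  {f : X → ℝ}

theorem Ergodic.ae_integral_le_birkhoffLiminf (hT : Ergodic T m) (hfm : Measurable f)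
    (hf : ∀ x, f x ∈ Icc 0 1) : ∀ᵐ x ∂m, ∫ y, f y ∂m ≤ birkhoffLiminf T f x := by
  obtain ⟨c, hc⟩ := hT.toPreErgodic.ae_eq_const_of_ae_eq_comp
    (measurable_birkhoffLiminf hT.toMeasurePreserving.measurable hfm)
    (birkhoffLiminf_comp hf)
  have hle := hT.toMeasurePreserving.integral_le_integral_birkhoffLiminf hfm hf
  rw [integral_congr_ae hc] at hle
  filter_upwards [hc] with x hx
  simpa [hx] using hle

theorem Ergodic.ae_tendsto_birkhoffAverage (hT : Ergodic T m) (hfm : Measurable f)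
    (hf : ∀ x, f x ∈ Icc 0 1) :
    ∀ᵐ x ∂m, Tendsto (birkhoffAverage ℝ T f · x) atTop (𝓝 (∫ y, f y ∂m)) := by
  have hf' : ∀ x, 1 - f x ∈ Icc 0 1 := fun x => ⟨sub_nonneg.2 (hf x).2, by linarith [(hf x).1]⟩
  have hint : ∫ y, (1 - f y) ∂m = 1 - ∫ y, f y ∂m := by
    rw [integral_sub (integrable_const 1) (integrable_of_forall_mem_Icc hfm hf)]
    simp
  filter_upwards [hT.ae_integral_le_birkhoffLiminf hfm hf, hT.ae_integral_le_birkhoffLiminf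
    (f := fun y => 1 - f y) (measurable_const.sub hfm) hf'] with x hlow hup
  rw [hint] at hup
  refine tendsto_order.2 ⟨fun a ha => eventually_lt_of_lt_liminf (ha.trans_le hlow)
    (isBoundedUnder_ge_birkhoffAverage (T := T) hf x), fun a ha => ?_⟩
  -- the upper bound is the lower bound for `1 - f`
  have ha' : 1 - a < birkhoffLiminf T (fun y => 1 - f y) x := by linarith
  filter_upwards [eventually_lt_of_lt_liminf ha' (isBoundedUnder_ge_birkhoffAverage (T := T) hf' x),
    eventually_ne_atTop 0] with n hn hn0
  rw [birkhoffAverage_one_sub hn0] at hn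
  linarith

end Ergodic

theorem eventually_exists_pos_of_tendsto_average {a : ℕ → ℝ} {d δ : ℝ} (hd : 0 < d)
    (hδ0 : 0 < δ) (hδ1 : δ < 1)
    (ha : Tendsto (fun n : ℕ => (n : ℝ)⁻¹ * ∑ k ∈ Finset.range n, a k) atTop (𝓝 d)) :
    ∀ᶠ n : ℕ in atTop, ∃ k ≤ n, (n : ℝ) - k < δ * n ∧ 0 < a k := by
  set S : ℕ → ℝ := fun n => ∑ k ∈ Finset.range n, a k
  set η := d * δ / 4 with hη
  have hS : ∀ᶠ n : ℕ in atTop, (d - η) * n ≤ S n ∧ S n ≤ (d + η) * n := by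
    filter_upwards [ha.eventually (Metric.closedBall_mem_nhds d (show 0 < η by positivity)),
      eventually_gt_atTop 0] with n hn hn0
    rw [Real.dist_eq, abs_le] at hn
    have hn' : (0 : ℝ) < n := by exact_mod_cast hn0
    have hSn : S n = n * ((n : ℝ)⁻¹ * S n) := by field_simp
    constructor <;> nlinarith
  -- the window `(n(1 - δ), n]` is `[s n, n]`
  set s : ℕ → ℕ := fun n => ⌊(1 - δ) * n⌋₊ + 1
  have hs : Tendsto s atTop atTop := (tendsto_add_atTop_nat 1).comp <|
    tendsto_nat_floor_atTop.comp (tendsto_natCast_atTop_atTop.const_mul_atTop (by linarith))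
  filter_upwards [(tendsto_add_atTop_nat 1).eventually hS, hs.eventually hS,
    eventually_gt_atTop 0] with n hSn hSs hn
  have hn' : (0 : ℝ) < n := by exact_mod_cast hn
  have hs_gt : (1 - δ) * n < s n := by
    simpa [s] using Nat.lt_floor_add_one ((1 - δ) * n)
  have hs_le : (s n : ℝ) ≤ (1 - δ) * n + 1 := by
    simpa [s] using Nat.floor_le (by nlinarith : 0 ≤ (1 - δ) * n)
  have hsn : s n ≤ n + 1 := by
    have : (s n : ℝ) ≤ n + 1 := by nlinarith
    exact_mod_cast this
  have hpos : 0 < ∑ k ∈ Finset.Ico (s n) (n + 1), a k := by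
    rw [Finset.sum_Ico_eq_sub _ hsn]
    change 0 < S (n + 1) - S (s n)
    push_cast at hSn
    have hn1 : (1 : ℝ) ≤ n := by exact_mod_cast hn
    nlinarith [hSn.1, hSs.2, mul_le_mul_of_nonneg_left hs_le (by positivity : 0 ≤ d + η),
      mul_nonneg (mul_pos hd hδ0).le (sub_nonneg.2 hn1), mul_pos (mul_pos (mul_pos hd hδ0) hδ0) hn']
  obtain ⟨k, hk, hak⟩ := Finset.exists_lt_of_sum_lt (f := fun _ => (0 : ℝ)) (by simpa using hpos)
  rw [Finset.mem_Ico] at hk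
  have hk' : (s n : ℝ) ≤ k := by exact_mod_cast hk.1
  exact ⟨k, Nat.lt_succ_iff.1 hk.2, by linarith, hak⟩

/-- For an ergodic p.m.p. transformation `T`, a set `E` of positive measure, `0 < δ < 1`
and `ε > 0`, there is `N` such that the set of points hitting `E` in every window
`(n(1−δ), n]` with `n ≥ N` has measure greater than `m(E) − ε`. -/
theorem stmt18 {X : Type*} [MeasurableSpace X] (m : Measure X) [IsProbabilityMeasure m]
    (T : X → X) (hT : Ergodic T m)
    (E : Set X) (hE : MeasurableSet E) (hEpos : 0 < m E)
    (δ : ℝ) (hδ0 : 0 < δ) (hδ1 : δ < 1)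
    (ε : ℝ) (hε : 0 < ε) :
    ∃ N : ℕ,
      ((m E).toReal - ε) <
        (m {x : X | ∀ n : ℕ, N ≤ n →
          ∃ n' : ℕ, (n' : ℝ) < δ * n ∧ T^[n - n'] x ∈ E}).toReal := by
  set A : ℕ → Set X := fun N => {x | ∀ n : ℕ, N ≤ n →
    ∃ n' : ℕ, (n' : ℝ) < δ * n ∧ T^[n - n'] x ∈ E}
  have hA_mono : Monotone A := fun N N' hN x hx n hn => hx n (hN.trans hn)
  have hA_ae : ∀ᵐ x ∂m, x ∈ ⋃ N, A N := by
    have hconv := hT.ae_tendsto_birkhoffAverage (measurable_const.indicator hE)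
      (f := E.indicator 1) fun x => by by_cases hx : x ∈ E <;> simp [hx]
    rw [integral_indicator_one hE] at hconv
    filter_upwards [hconv] with x hx
    obtain ⟨N, hN⟩ := (eventually_exists_pos_of_tendsto_average
      (ENNReal.toReal_pos hEpos.ne' (measure_ne_top m E)) hδ0 hδ1 hx).exists_forall_of_atTop
    refine mem_iUnion.2 ⟨N, fun n hn => ?_⟩
    obtain ⟨k, hkn, hk, hpos⟩ := hN n hn
    refine ⟨n - k, by rw [Nat.cast_sub hkn]; linarith, ?_⟩
    rw [Nat.sub_sub_self hkn]
    by_contra hkE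
    simp [indicator_of_notMem hkE] at hpos
  have hA_union : m (⋃ N, A N) = 1 := by
    rw [measure_congr (ae_eq_univ.2 ((mem_ae_iff (s := ⋃ N, A N)).1 hA_ae)), measure_univ]
  have hA_lim : Tendsto (fun N => (m (A N)).toReal) atTop (𝓝 1) := by
    have h := tendsto_measure_iUnion_atTop (μ := m) hA_mono
    rw [hA_union] at h
    exact (ENNReal.tendsto_toReal ENNReal.one_ne_top).comp h
  have hE_le : (m E).toReal ≤ 1 := measureReal_le_one
  exact (hA_lim.eventually (eventually_gt_nhds (by linarith))).exists
end
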